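/- arXiv:2605.26398 — 3 statements merged into one kernel-verified Lean document; each statement's English description precedes it below -/
import Mathlib

section
/- Let (𝔞, M) be a Jordan–Lefschetz pair over a field K of characteristic 0 and let 𝔤 = llv(𝔞, M), graded by 𝔤_k = 𝔤 ∩ End(M)_k. Let 𝔥 = ⊕_{k∈ℤ} 𝔥_k be a graded Lie algebra over K (a Lie algebra with a direct sum decomposition satisfying [𝔥_i, 𝔥_j] ⊆ 𝔥_{i+j}) and let φ : 𝔤 → 𝔥 be a Lie algebra homomorphism with φ(𝔤_k) ⊆ 𝔥_k for all k. If the restriction φ₂ : 𝔤₂ → 𝔥₂ of φ to the degree 2 parts is injective, then φ is injective. -/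
/-!
Let `I = ker φ`, an ideal of `𝔤 = llv(𝔞, M)`. Since `φ` preserves degrees and `𝔤` lives in
degrees `-2, 0, 2`, the ideal `I` is graded, and `I₂ = 0` by hypothesis. A degree-0 element
`v ∈ I` commutes with `h`, with each `e_a` (because `[e_a, v] ∈ I₂`) and with each `f_a`: the
element `z = [f_a, v] ∈ I₋₂` satisfies `[f_a, z] ∈ 𝔤₋₄ = 0` and `[e_a, [e_a, z]] ∈ I₂ = 0`, and an
`sl₂`-lowest-weight vector of weight `-2` killed by `e_a²` vanishes. So `v` is central, hence
zero. Therefore `I = I₋₂`, which is abelian since `[I₋₂, I₋₂] ⊆ 𝔤₋₄ = 0`, and an abelian ideal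
of a semisimple Lie algebra is zero.
-/

open LinearMap TensorProduct

attribute [local instance 100] LieRing.ofAssociativeRing

section Defs

variable {K : Type} [Field K] {M : Type} [AddCommGroup M] [Module K M]

/-- `e` is a linear endomorphism of degree `n` with respect to the grading `gr`. -/
def HasDeg (gr : ℤ → Submodule K M) (n : ℤ) (e : Module.End K M) : Prop :=
  ∀ k : ℤ, ∀ x ∈ gr k, e x ∈ gr (k + n)

/-- `e` is a degree-2 endomorphism having the hard Lefschetz property:
for every `k ∈ ℕ` the `k`-fold composite `e^k : M_{-k} → M_k` is an isomorphism. -/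
def HardLef (gr : ℤ → Submodule K M) (e : Module.End K M) : Prop :=
  HasDeg gr 2 e ∧ ∀ k : ℕ,
    (∀ x ∈ gr (-(k : ℤ)), (e ^ k) x = 0 → x = 0) ∧
    (∀ y ∈ gr (k : ℤ), ∃ x ∈ gr (-(k : ℤ)), (e ^ k) x = y)

/-- `h` is the grading operator: multiplication by `k` on the degree-`k` part. -/
def IsGradingOp (gr : ℤ → Submodule K M) (h : Module.End K M) : Prop :=
  ∀ k : ℤ, ∀ x ∈ gr k, h x = (k : K) • x

/-- The generating set of the LLV algebra: for each operator `e'` of the given action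
(`P e'`) with the hard Lefschetz property, the sl₂-triple `(e', h, f)`, where `f` is the
(unique) endomorphism of degree `-2` with `⁅e', f⁆ = h`. -/
def llvGen (gr : ℤ → Submodule K M) (h : Module.End K M)
    (P : Module.End K M → Prop) : Set (Module.End K M) :=
  {h} ∪ {x | ∃ e', P e' ∧ HardLef gr e' ∧
      (x = e' ∨ (HasDeg gr (-2) x ∧ ⁅e', x⁆ = h))}

/-- The LLV algebra: the Lie subalgebra of `gl(M)` generated by the sl₂-triples
`(e_a, h, f_a)` arising from the elements `a` with the hard Lefschetz property. -/
def llv (gr : ℤ → Submodule K M) (h : Module.End K M)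
    (P : Module.End K M → Prop) : LieSubalgebra K (Module.End K M) :=
  LieSubalgebra.lieSpan K (Module.End K M) (llvGen gr h P)

/-- The Lie subalgebra `L ⊆ gl(M)` is concentrated in degrees `-2`, `0` and `2`. -/
def ConcJL (gr : ℤ → Submodule K M) (L : LieSubalgebra K (Module.End K M)) : Prop :=
  ∀ x ∈ L, ∃ u v w, u ∈ L ∧ v ∈ L ∧ w ∈ L ∧
    HasDeg gr (-2) u ∧ HasDeg gr 0 v ∧ HasDeg gr 2 w ∧ x = u + v + w

end Defs

namespace DirectSum.IsInternal

variable {R ι N : Type*} [Ring R] [AddCommGroup N] [Module R N] [DecidableEq ι]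
  {A : ι → Submodule R N}

theorem linearMap_ext {P : Type*} [AddCommGroup P] [Module R P] (hA : IsInternal A)
    {f g : N →ₗ[R] P} (h : ∀ i, ∀ x ∈ A i, f x = g x) : f = g :=
  LinearMap.ext_on (s := ⋃ i, (A i : Set N))
    (by rw [← Submodule.iSup_eq_span, hA.submodule_iSup_eq_top])
    fun x hx => by
      obtain ⟨i, hi⟩ := Set.mem_iUnion.mp hx
      exact h i x hi

theorem eq_zero_of_eq_add_add (hA : IsInternal A) {i j₁ j₂ j₃ : ι}
    (h₁ : j₁ ≠ i) (h₂ : j₂ ≠ i) (h₃ : j₃ ≠ i) {x y₁ y₂ y₃ : N} (hx : x ∈ A i)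
    (hy₁ : y₁ ∈ A j₁) (hy₂ : y₂ ∈ A j₂) (hy₃ : y₃ ∈ A j₃) (h : x = y₁ + y₂ + y₃) : x = 0 := by
  have hdisj := hA.submodule_iSupIndep.disjoint_biSup (x := i) (y := {j₁, j₂, j₃})
    (by simp [h₁.symm, h₂.symm, h₃.symm])
  refine Submodule.disjoint_def.mp hdisj x hx ?_
  rw [h]
  refine add_mem (add_mem ?_ ?_) ?_
  · exact Submodule.mem_iSup_of_mem j₁ (Submodule.mem_iSup_of_mem (by simp) hy₁)
  · exact Submodule.mem_iSup_of_mem j₂ (Submodule.mem_iSup_of_mem (by simp) hy₂)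
  · exact Submodule.mem_iSup_of_mem j₃ (Submodule.mem_iSup_of_mem (by simp) hy₃)

theorem eq_zero_of_add_add_eq_zero (hA : IsInternal A) {i j k : ι}
    (hij : i ≠ j) (hik : i ≠ k) (hjk : j ≠ k) {a b c : N} (ha : a ∈ A i) (hb : b ∈ A j)
    (hc : c ∈ A k) (h : a + b + c = 0) : a = 0 ∧ b = 0 ∧ c = 0 := by
  have ha0 : a = 0 := hA.eq_zero_of_eq_add_add hij.symm hik.symm hik.symm ha (neg_mem hb)
    (neg_mem hc) (zero_mem _) (by rw [add_zero, ← neg_add, eq_neg_iff_add_eq_zero, ← add_assoc, h])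
  rw [ha0, zero_add] at h
  have hb0 : b = 0 := hA.eq_zero_of_eq_add_add hjk.symm hjk.symm hjk.symm hb (neg_mem hc)
    (zero_mem _) (zero_mem _) (by rw [add_zero, add_zero, eq_neg_iff_add_eq_zero, h])
  rw [hb0, zero_add] at h
  exact ⟨ha0, hb0, h⟩

end DirectSum.IsInternal

section GradedEnd

variable {K M : Type} [Field K] [AddCommGroup M] [Module K M] {gr : ℤ → Submodule K M}

theorem HasDeg.lie {m n : ℤ} {x y : Module.End K M} (hx : HasDeg gr m x) (hy : HasDeg gr n y) :
    HasDeg gr (m + n) ⁅x, y⁆ := by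
  intro k z hz
  rw [Ring.lie_def, LinearMap.sub_apply, Module.End.mul_apply, Module.End.mul_apply]
  have hxy := hx _ _ (hy k z hz)
  have hyx := hy _ _ (hx k z hz)
  rw [add_right_comm, add_assoc] at hxy
  rw [add_assoc] at hyx
  exact sub_mem hxy hyx

theorem IsGradingOp.lie_eq_smul (hgr : DirectSum.IsInternal gr) {h : Module.End K M}
    (hop : IsGradingOp gr h) {n : ℤ} {x : Module.End K M} (hx : HasDeg gr n x) :
    ⁅h, x⁆ = (n : K) • x := by
  refine hgr.linearMap_ext fun k z hz => ?_
  rw [Ring.lie_def, LinearMap.sub_apply, Module.End.mul_apply, Module.End.mul_apply,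
    hop _ _ (hx k z hz), hop k z hz, map_smul, LinearMap.smul_apply, ← sub_smul]
  congr 1
  push_cast
  ring

theorem ConcJL.eq_zero_of_hasDeg (hgr : DirectSum.IsInternal gr)
    {L : LieSubalgebra K (Module.End K M)} (hJL : ConcJL gr L) {x : Module.End K M} (hxL : x ∈ L)
    {n : ℤ} (hx : HasDeg gr n x) (h₁ : n ≠ -2) (h₂ : n ≠ 0) (h₃ : n ≠ 2) : x = 0 := by
  obtain ⟨u, v, w, -, -, -, hu, hv, hw, rfl⟩ := hJL x hxL
  refine hgr.linearMap_ext fun k z hz => ?_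
  exact hgr.eq_zero_of_eq_add_add (by omega) (by omega) (by omega) (hx k z hz) (hu k z hz)
    (hv k z hz) (hw k z hz) rfl

end GradedEnd

theorem eq_zero_of_lie_eq_neg_two_smul {K A N : Type*} [Field K] [NeZero (2 : K)] [LieRing A]
    [LieAlgebra K A] [AddCommGroup N] [Module K N] [LieRingModule A N] [LieModule K A N]
    {e f h : A} {z : N} (hef : ⁅e, f⁆ = h) (hhe : ⁅h, e⁆ = (2 : K) • e)
    (hz : ⁅h, z⁆ = -(2 : K) • z) (hfz : ⁅f, z⁆ = 0) (hez : ⁅e, ⁅e, z⁆⁆ = 0) : z = 0 := by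
  have hhez : ⁅h, ⁅e, z⁆⁆ = 0 := by
    rw [leibniz_lie, hhe, hz, smul_lie, lie_smul, ← add_smul]
    simp
  have hfez : ⁅f, ⁅e, z⁆⁆ = (2 : K) • z := by
    rw [leibniz_lie, ← lie_skew, hef, hfz, lie_zero, add_zero, neg_lie, hz, neg_smul, neg_neg]
  have hez0 : ⁅e, z⁆ = 0 := by
    have h2 : ⁅e, ⁅f, ⁅e, z⁆⁆⁆ = 0 := by rw [leibniz_lie, hef, hhez, hez, lie_zero, add_zero]
    rw [hfez, lie_smul] at h2
    exact (smul_eq_zero.mp h2).resolve_left two_ne_zero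
  have h2z : (2 : K) • z = 0 := by rw [← hfez, hez0, lie_zero]
  exact (smul_eq_zero.mp h2z).resolve_left two_ne_zero

namespace llv

variable {K M : Type} [Field K] [NeZero (2 : K)] [AddCommGroup M] [Module K M]
  {gr : ℤ → Submodule K M} {h : Module.End K M} {P : Module.End K M → Prop}

theorem lie_eq_zero_of_mem_llvGen (hgr : DirectSum.IsInternal gr) (hop : IsGradingOp gr h)
    (hJL : ConcJL gr (llv gr h P)) {I : LieIdeal K (llv gr h P)}
    (hI₂ : ∀ x ∈ I, HasDeg gr 2 (x : Module.End K M) → x = 0) {v : llv gr h P} (hvI : v ∈ I)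
    (hv : HasDeg gr 0 (v : Module.End K M)) {g : Module.End K M} (hg : g ∈ llvGen gr h P) :
    ⁅g, (v : Module.End K M)⁆ = 0 := by
  rcases hg with rfl | ⟨e, hPe, he, rfl | ⟨hf, hef⟩⟩
  · simp [hop.lie_eq_smul hgr hv]
  · let E : llv gr h P := ⟨g, LieSubalgebra.subset_lieSpan (Or.inr ⟨g, hPe, he, Or.inl rfl⟩)⟩
    exact congrArg Subtype.val (hI₂ ⁅E, v⁆ (I.lie_mem hvI) (by simpa using he.1.lie hv))
  · let E : llv gr h P := ⟨e, LieSubalgebra.subset_lieSpan (Or.inr ⟨e, hPe, he, Or.inl rfl⟩)⟩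
    let F : llv gr h P :=
      ⟨g, LieSubalgebra.subset_lieSpan (Or.inr ⟨e, hPe, he, Or.inr ⟨hf, hef⟩⟩)⟩
    let Hh : llv gr h P := ⟨h, LieSubalgebra.subset_lieSpan (Or.inl rfl)⟩
    have hz : HasDeg gr (-2) ⁅g, (v : Module.End K M)⁆ := hf.lie hv
    suffices ⁅F, v⁆ = 0 from congrArg Subtype.val this
    refine eq_zero_of_lie_eq_neg_two_smul (K := K) (e := E) (f := F) (h := Hh)
      (Subtype.ext hef) (Subtype.ext ?_) (Subtype.ext ?_) (Subtype.ext ?_)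
      (hI₂ _ (I.lie_mem (I.lie_mem (I.lie_mem hvI))) (by simpa using he.1.lie (he.1.lie hz)))
    · simpa using hop.lie_eq_smul hgr he.1
    · simpa using hop.lie_eq_smul hgr hz
    · exact hJL.eq_zero_of_hasDeg (n := -4) hgr ⁅F, ⁅F, v⁆⁆.2 (by simpa using hf.lie hz)
        (by norm_num) (by norm_num) (by norm_num)

theorem eq_zero_of_mem_ideal_of_hasDeg_zero [LieAlgebra.HasTrivialRadical K (llv gr h P)]
    (hgr : DirectSum.IsInternal gr) (hop : IsGradingOp gr h) (hJL : ConcJL gr (llv gr h P))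
    {I : LieIdeal K (llv gr h P)} (hI₂ : ∀ x ∈ I, HasDeg gr 2 (x : Module.End K M) → x = 0)
    {v : llv gr h P} (hvI : v ∈ I) (hv : HasDeg gr 0 (v : Module.End K M)) : v = 0 := by
  have hcomm (x : Module.End K M) (hx : x ∈ llv gr h P) : ⁅x, (v : Module.End K M)⁆ = 0 := by
    induction hx using LieSubalgebra.lieSpan_induction with
    | mem g hg => exact lie_eq_zero_of_mem_llvGen hgr hop hJL hI₂ hvI hv hg
    | zero => exact zero_lie _
    | add x y _ _ hx hy => rw [add_lie, hx, hy, add_zero]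
    | smul c x _ hx => rw [smul_lie, hx, smul_zero]
    | lie x y _ _ hx hy => rw [lie_lie, hx, hy, lie_zero, lie_zero, sub_zero]
  have hcen : v ∈ LieAlgebra.center K (llv gr h P) :=
    (LieModule.mem_maxTrivSubmodule _ _ _ _).mpr fun x => Subtype.ext (hcomm x x.2)
  simpa using hcen

theorem ideal_eq_bot_of_hasDeg_two_eq_zero [LieAlgebra.HasTrivialRadical K (llv gr h P)]
    (hgr : DirectSum.IsInternal gr) (hop : IsGradingOp gr h) (hJL : ConcJL gr (llv gr h P))
    {I : LieIdeal K (llv gr h P)}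
    (hI : ∀ x ∈ I, ∃ u ∈ I, ∃ v ∈ I, ∃ w ∈ I, HasDeg gr (-2) (u : Module.End K M) ∧
      HasDeg gr 0 (v : Module.End K M) ∧ HasDeg gr 2 (w : Module.End K M) ∧ x = u + v + w)
    (hI₂ : ∀ x ∈ I, HasDeg gr 2 (x : Module.End K M) → x = 0) : I = ⊥ := by
  have hdeg (x : llv gr h P) (hx : x ∈ I) : HasDeg gr (-2) (x : Module.End K M) := by
    obtain ⟨u, -, v, hvI, w, hwI, hu, hv, hw, rfl⟩ := hI x hx
    rwa [hI₂ w hwI hw, eq_zero_of_mem_ideal_of_hasDeg_zero hgr hop hJL hI₂ hvI hv, add_zero,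
      add_zero]
  have : IsLieAbelian I := ⟨fun x y => Subtype.ext <| Subtype.ext <|
    hJL.eq_zero_of_hasDeg (n := -4) hgr ⁅(x : llv gr h P), (y : llv gr h P)⁆.2
      (by simpa using (hdeg x x.2).lie (hdeg y y.2)) (by norm_num) (by norm_num) (by norm_num)⟩
  exact LieAlgebra.HasTrivialRadical.eq_bot_of_isSolvable I

end llv

theorem stmt_0_general {K : Type} [Field K] [CharZero K]
    {M : Type} [AddCommGroup M] [Module K M]
    (gr : ℤ → Submodule K M) (hgr : DirectSum.IsInternal gr)
    {𝔞 : Type} [AddCommGroup 𝔞] [Module K 𝔞]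
    (e : 𝔞 →ₗ[K] Module.End K M)
    (h : Module.End K M) (hop : IsGradingOp gr h)
    (L : LieSubalgebra K (Module.End K M))
    (hL : L = llv gr h (fun x => ∃ a : 𝔞, x = e a))
    (hss : LieAlgebra.IsSemisimple K ↥L)
    (hJL : ConcJL gr L)
    {H : Type} [LieRing H] [LieAlgebra K H]
    (grH : ℤ → Submodule K H) (hgrH : DirectSum.IsInternal grH)
    (φ : ↥L →ₗ⁅K⁆ H)
    (hφdeg : ∀ k : ℤ, ∀ x : ↥L, HasDeg gr k ↑x → φ x ∈ grH k)
    (hφ2 : ∀ x : ↥L, HasDeg gr 2 ↑x → φ x = 0 → x = 0) :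
    Function.Injective φ := by
  subst hL
  have hker : ∀ x ∈ φ.ker, ∃ u ∈ φ.ker, ∃ v ∈ φ.ker, ∃ w ∈ φ.ker,
      HasDeg gr (-2) (u : Module.End K M) ∧ HasDeg gr 0 (v : Module.End K M) ∧
      HasDeg gr 2 (w : Module.End K M) ∧ x = u + v + w := by
    intro x hx
    obtain ⟨u, v, w, hu, hv, hw, du, dv, dw, hx_eq⟩ := hJL x x.2
    have hsum : x = ⟨u, hu⟩ + ⟨v, hv⟩ + ⟨w, hw⟩ := Subtype.ext hx_eq
    obtain ⟨φu, φv, φw⟩ := hgrH.eq_zero_of_add_add_eq_zero (by norm_num) (by norm_num)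
      (by norm_num) (hφdeg _ ⟨u, hu⟩ du) (hφdeg _ ⟨v, hv⟩ dv) (hφdeg _ ⟨w, hw⟩ dw)
      (by rw [← map_add, ← map_add, ← hsum]; exact LieHom.mem_ker.mp hx)
    exact ⟨_, φu, _, φv, _, φw, du, dv, dw, hsum⟩
  rw [← LieHom.ker_eq_bot]
  exact llv.ideal_eq_bot_of_hasDeg_two_eq_zero hgr hop hJL hker fun x hx hx₂ => hφ2 x hx₂ hx

/-- For a Jordan–Lefschetz pair `(𝔞, M)` with `𝔤 = llv(𝔞, M)`, a degree-preserving Lie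
algebra homomorphism `φ : 𝔤 → 𝔥` to a graded Lie algebra `𝔥` which is injective on the
degree-2 parts is injective. -/
theorem stmt_0 {K : Type} [Field K] [CharZero K]
    {M : Type} [AddCommGroup M] [Module K M] [FiniteDimensional K M]
    (gr : ℤ → Submodule K M) (hgr : DirectSum.IsInternal gr)
    {𝔞 : Type} [AddCommGroup 𝔞] [Module K 𝔞] [FiniteDimensional K 𝔞]
    (e : 𝔞 →ₗ[K] Module.End K M)
    (hdeg : ∀ a : 𝔞, HasDeg gr 2 (e a))
    (hcomm : ∀ a b : 𝔞, Commute (e a) (e b))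
    (hHL : ∃ a : 𝔞, HardLef gr (e a))
    (h : Module.End K M) (hop : IsGradingOp gr h)
    (L : LieSubalgebra K (Module.End K M))
    (hL : L = llv gr h (fun x => ∃ a : 𝔞, x = e a))
    (hss : LieAlgebra.IsSemisimple K ↥L)
    (hJL : ConcJL gr L)
    {H : Type} [LieRing H] [LieAlgebra K H] [FiniteDimensional K H]
    (grH : ℤ → Submodule K H) (hgrH : DirectSum.IsInternal grH)
    (hbrH : ∀ i j : ℤ, ∀ x ∈ grH i, ∀ y ∈ grH j, ⁅x, y⁆ ∈ grH (i + j))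
    (φ : ↥L →ₗ⁅K⁆ H)
    (hφdeg : ∀ k : ℤ, ∀ x : ↥L, HasDeg gr k ↑x → φ x ∈ grH k)
    (hφ2 : ∀ x : ↥L, HasDeg gr 2 ↑x → φ x = 0 → x = 0) :
    Function.Injective φ :=
  stmt_0_general gr hgr e h hop L hL hss hJL grH hgrH φ hφdeg hφ2
end

section
/- Let K be a field of characteristic 0 and let 𝔤 be a simple Lie algebra over K with dim_K 𝔤 = 3 that contains a nonzero element e such that the adjoint map ad(e) : 𝔤 → 𝔤 is nilpotent. Then 𝔤 is isomorphic to sl₂(K). -/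
/-!
Write `A = ad e`; as a nilpotent endomorphism of a 3-dimensional space, `A³ = 0`. By Cartan's
criterion the Killing form of the simple algebra is nondegenerate, and `A² = 0` is impossible:
the Jacobi identity then gives `A ∘ ad x ∘ A = 0`, so `A ∘ ad x` is nilpotent and `e` is
Killing-orthogonal to everything. Hence `A` is a single nilpotent Jordan block, its kernel is
the line `K e`, and `e = A² v` for some `v`. With `m = [e, v]`, the Jacobi identity puts
`[m, v] - v` in `ker A`, say `[m, v] = v + t e`, and then `(h, e, f) = (-2m, e, -2v - t e)`
is an `sl₂`-triple. Its elements are eigenvectors of `ad h` for the distinct eigenvalues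
`0, 2, -2`, hence a basis, and `M ↦ M₀₀ h + M₀₁ e + M₁₀ f` is an isomorphism `sl₂(K) ≃ L`.
-/

open LieAlgebra Module

namespace Module.End

section CommRing

variable {R M : Type*} [CommRing R] [AddCommGroup M] [Module R M] {A : End R M}

lemma pow_finrank_eq_zero_of_isNilpotent [IsDomain R] [Module.Free R M] [Module.Finite R M]
    (hA : IsNilpotent A) : A ^ finrank R M = 0 := by
  simpa [hA.charpoly_eq_X_pow_finrank] using A.aeval_self_charpoly

lemma exists_apply_apply_ne_zero (h2 : A ^ 2 ≠ 0) : ∃ v, A (A v) ≠ 0 := by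
  by_contra! h
  exact h2 (LinearMap.ext fun v => by simpa [sq] using h v)

lemma apply_apply_apply_eq_zero (h3 : A ^ 3 = 0) (v : M) : A (A (A v)) = 0 := by
  simpa [pow_succ] using LinearMap.congr_fun h3 v

end CommRing

variable {K V : Type*} [Field K] [AddCommGroup V] [Module K V] {A : End K V}

lemma linearIndependent_pair_apply {x : V} (hx : A x ≠ 0) (hAx : A (A x) = 0) :
    LinearIndependent K ![x, A x] := by
  refine LinearIndependent.pair_iff.mpr fun s t hst => ?_
  have hs : s • A x = 0 := by simpa [hAx] using congr_arg A hst
  obtain rfl : s = 0 := (smul_eq_zero.mp hs).resolve_right hx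
  simp only [zero_smul, zero_add, smul_eq_zero] at hst
  exact ⟨rfl, hst.resolve_right hx⟩

lemma finrank_ker_le_one_of_sq_ne_zero [FiniteDimensional K V] (hV : finrank K V = 3)
    (h3 : A ^ 3 = 0) (h2 : A ^ 2 ≠ 0) : finrank K (LinearMap.ker A) ≤ 1 := by
  obtain ⟨v, hv⟩ := exists_apply_apply_ne_zero h2
  have hli := linearIndependent_pair_apply hv (apply_apply_apply_eq_zero h3 v)
  have hle : Submodule.span K (Set.range ![A v, A (A v)]) ≤ LinearMap.range A := by
    rw [Submodule.span_le, Set.range_subset_iff]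
    intro i
    fin_cases i
    exacts [⟨v, rfl⟩, ⟨A v, rfl⟩]
  have hrange := Submodule.finrank_mono hle
  rw [finrank_span_eq_card hli, Fintype.card_fin] at hrange
  have := LinearMap.finrank_range_add_finrank_ker A
  omega

lemma ker_eq_span_singleton_of_sq_ne_zero [FiniteDimensional K V] (hV : finrank K V = 3)
    (h3 : A ^ 3 = 0) (h2 : A ^ 2 ≠ 0) {e : V} (he : e ≠ 0) (hAe : A e = 0) :
    LinearMap.ker A = K ∙ e := by
  refine (Submodule.eq_of_le_of_finrank_le ?_ ?_).symm
  · rwa [Submodule.span_singleton_le_iff_mem]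
  · rw [finrank_span_singleton he]
    exact finrank_ker_le_one_of_sq_ne_zero hV h3 h2

lemma exists_apply_apply_eq_of_ker_eq_span {e : V} (hker : LinearMap.ker A = K ∙ e)
    (h3 : A ^ 3 = 0) (h2 : A ^ 2 ≠ 0) : ∃ v, A (A v) = e := by
  obtain ⟨v, hv⟩ := exists_apply_apply_ne_zero h2
  have hmem : A (A v) ∈ K ∙ e := hker ▸ apply_apply_apply_eq_zero h3 v
  obtain ⟨c, hc⟩ := Submodule.mem_span_singleton.mp hmem
  have hc0 : c ≠ 0 := by rintro rfl; exact hv (by rw [← hc, zero_smul])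
  refine ⟨c⁻¹ • v, ?_⟩
  rw [map_smul, map_smul, ← hc, smul_smul, inv_mul_cancel₀ hc0, one_smul]

end Module.End

namespace LieAlgebra

variable {K L : Type*} [Field K] [LieRing L] [LieAlgebra K L]

lemma ad_mul_ad_mul_ad_eq_zero_of_ad_sq_eq_zero [NeZero (2 : K)] {e : L}
    (he : ad K L e ^ 2 = 0) (x : L) : ad K L e * ad K L x * ad K L e = 0 := by
  have hx : ⁅e, ⁅e, x⁆⁆ = 0 := by simpa [sq] using LinearMap.congr_fun he x
  have hexpand : ad K L ⁅e, ⁅e, x⁆⁆ = ad K L e ^ 2 * ad K L x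
      - (2 : K) • (ad K L e * ad K L x * ad K L e) + ad K L x * ad K L e ^ 2 := by
    simp only [LieHom.map_lie, Ring.lie_def, sq, two_smul]
    noncomm_ring
  rw [hx, map_zero, he, zero_mul, mul_zero, zero_sub, add_zero, zero_eq_neg] at hexpand
  exact (smul_eq_zero.mp hexpand).resolve_left two_ne_zero

lemma killingForm_eq_zero_of_ad_sq_eq_zero [NeZero (2 : K)] {e : L} (he : ad K L e ^ 2 = 0)
    (x : L) : killingForm K L e x = 0 := by
  rw [killingForm_apply_apply, ← Module.End.mul_eq_comp]
  refine (LinearMap.isNilpotent_trace_of_isNilpotent ⟨2, ?_⟩).eq_zero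
  rw [sq, ← mul_assoc, ad_mul_ad_mul_ad_eq_zero_of_ad_sq_eq_zero he, zero_mul]

lemma IsKilling.eq_zero_of_ad_sq_eq_zero [NeZero (2 : K)] [IsKilling K L] {e : L}
    (he : ad K L e ^ 2 = 0) : e = 0 := by
  have hmem : e ∈ LinearMap.ker (killingForm K L) :=
    LinearMap.ext (killingForm_eq_zero_of_ad_sq_eq_zero he)
  simpa using hmem

lemma exists_isSl2Triple_of_lie_lie_eq [NeZero (2 : K)] {e v : L} (he : e ≠ 0)
    (hker : LinearMap.ker (ad K L e) ≤ K ∙ e) (hv : ⁅e, ⁅e, v⁆⁆ = e) :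
    ∃ h f : L, IsSl2Triple h e f := by
  set m := ⁅e, v⁆
  have hme : ⁅m, e⁆ = -e := by rw [← lie_skew, hv]
  have hm : m ≠ 0 := by rintro hm; rw [hm, lie_zero] at hv; exact he hv.symm
  obtain ⟨t, ht⟩ : ∃ t : K, t • e = ⁅m, v⁆ - v := by
    refine Submodule.mem_span_singleton.mp (hker ?_)
    rw [LinearMap.mem_ker, ad_apply, lie_sub, leibniz_lie, hv, lie_self, add_zero, sub_self]
  have hmv : ⁅m, v⁆ = v + t • e := by rw [ht]; abel
  refine ⟨(-2 : K) • m, (-2 : K) • v - t • e, ⟨?_, ?_, ?_, ?_⟩⟩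
  · exact smul_ne_zero (neg_ne_zero.mpr two_ne_zero) hm
  · rw [lie_sub, lie_smul, lie_smul, lie_self, smul_zero, sub_zero]
  · rw [smul_lie, hme]; module
  · rw [smul_lie, lie_sub, lie_smul, lie_smul, hmv, hme]; module

lemma SpecialLinear.sl_fin_two_apply_one_one {R : Type*} [CommRing R]
    (M : SpecialLinear.sl (Fin 2) R) : M.1 1 1 = -M.1 0 0 :=
  eq_neg_of_add_eq_zero_right <| by
    simpa [Matrix.trace_fin_two] using (LinearMap.mem_ker.mp M.2 : Matrix.trace M.1 = 0)

end LieAlgebra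

namespace IsSl2Triple

section CommRing

variable {R L : Type*} [CommRing R] [LieRing L] [LieAlgebra R L] {h e f : L}

variable (R) in
@[simps]
def fromSl2 (t : IsSl2Triple h e f) : SpecialLinear.sl (Fin 2) R →ₗ⁅R⁆ L where
  toFun M := M.1 0 0 • h + M.1 0 1 • e + M.1 1 0 • f
  map_add' M N := by
    simp only [AddMemClass.coe_add, Matrix.add_apply]
    module
  map_smul' c M := by
    simp only [SetLike.val_smul, Matrix.smul_apply, smul_eq_mul, RingHom.id_apply]
    module
  map_lie' {M N} := by
    simp only [SpecialLinear.sl_bracket, Matrix.sub_apply, Matrix.mul_apply, Fin.sum_univ_two,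
      lie_add, add_lie, lie_smul, smul_lie, lie_self, smul_zero,
      SpecialLinear.sl_fin_two_apply_one_one M, SpecialLinear.sl_fin_two_apply_one_one N,
      t.lie_e_f, t.lie_h_e_smul R, t.lie_lie_smul_f R, ← lie_skew f e, ← lie_skew e h,
      ← lie_skew f h]
    module

end CommRing

variable {K L : Type*} [Field K] [LieRing L] [LieAlgebra K L] {h e f : L}

lemma linearIndependent [NeZero (2 : K)] (t : IsSl2Triple h e f) :
    LinearIndependent K ![h, e, f] := by
  refine (ad K L h).eigenvectors_linearIndependent' ![0, 2, -2] ?_ _ fun i => ?_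
  · have h2 : (2 : K) ≠ 0 := two_ne_zero
    have h4 : (2 : K) + 2 ≠ 0 := by rw [← two_mul]; exact mul_ne_zero h2 h2
    intro i j hij
    fin_cases i <;> fin_cases j <;> simp_all [eq_neg_iff_add_eq_zero, eq_comm]
  · fin_cases i
    · exact ⟨by simp, t.h_ne_zero⟩
    · exact ⟨by simp [t.lie_h_e_smul K], t.e_ne_zero⟩
    · exact ⟨by simp [t.lie_lie_smul_f K], t.f_ne_zero⟩

lemma fromSl2_bijective [NeZero (2 : K)] (t : IsSl2Triple h e f) (hL : finrank K L = 3) :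
    Function.Bijective (t.fromSl2 K) := by
  have hli := t.linearIndependent (K := K)
  constructor
  · refine (injective_iff_map_eq_zero _).mpr fun M hM => ?_
    have hc := Fintype.linearIndependent_iff.mp hli ![M.1 0 0, M.1 0 1, M.1 1 0]
      (by simpa [Fin.sum_univ_three] using hM)
    ext i j
    fin_cases i <;> fin_cases j
    exacts [hc 0, hc 1, hc 2,
      (SpecialLinear.sl_fin_two_apply_one_one M).trans (neg_eq_zero.mpr (hc 0))]
  · intro x
    have hx : x ∈ Submodule.span K (Set.range ![h, e, f]) := by
      rw [hli.span_eq_top_of_card_eq_finrank (by simp [hL])]; trivial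
    obtain ⟨c, rfl⟩ := Submodule.mem_span_range_iff_exists_fun K |>.mp hx
    refine ⟨⟨!![c 0, c 1; c 2, -c 0], by simp [SpecialLinear.sl, Matrix.trace_fin_two]⟩, ?_⟩
    simp [Fin.sum_univ_three]

end IsSl2Triple

/-- A simple Lie algebra of dimension 3 over a field of characteristic 0 containing a
nonzero ad-nilpotent element is isomorphic to `sl₂`. -/
theorem stmt_11 {K : Type} [Field K] [CharZero K]
    {L : Type} [LieRing L] [LieAlgebra K L] [LieAlgebra.IsSimple K L]
    [Module.Finite K L] (hdim : Module.finrank K L = 3)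
    (e : L) (he : e ≠ 0) (hnil : IsNilpotent ((LieAlgebra.ad K L e : Module.End K L))) :
    Nonempty (L ≃ₗ⁅K⁆ ↥(LieAlgebra.SpecialLinear.sl (Fin 2) K)) := by
  set A := ad K L e
  have hA3 : A ^ 3 = 0 := hdim ▸ Module.End.pow_finrank_eq_zero_of_isNilpotent hnil
  have hA2 : A ^ 2 ≠ 0 := fun h => he (IsKilling.eq_zero_of_ad_sq_eq_zero h)
  have hker : LinearMap.ker A = K ∙ e :=
    Module.End.ker_eq_span_singleton_of_sq_ne_zero hdim hA3 hA2 he (lie_self e)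
  obtain ⟨v, hv⟩ := Module.End.exists_apply_apply_eq_of_ker_eq_span hker hA3 hA2
  obtain ⟨h, f, ht⟩ := exists_isSl2Triple_of_lie_lie_eq he hker.le hv
  exact ⟨(LieEquiv.ofBijective _ (ht.fromSl2_bijective hdim)).symm⟩
end

section
/- Let K be a field of characteristic 0, let V be a K-vector space with 2 ≤ dim V < ∞ equipped with a nondegenerate symmetric bilinear form b, and let U = Kα ⊕ Kβ be the hyperbolic plane with symmetric bilinear form determined by B(α, α) = B(β, β) = 0 and B(α, β) = 1. Equip W = U ⊕ V with the orthogonal direct sum form B ⊥ b, and let 𝔰𝔬(W) be the Lie algebra of endomorphisms of W that are skew-adjoint with respect to this form. Let h ∈ 𝔰𝔬(W) be the endomorphism with h(α) = −2α, h(β) = 2β and h|_V = 0. Then 𝔰𝔬(W) is generated as a Lie algebra by the set {x ∈ 𝔰𝔬(W) : [h, x] = 2x} ∪ {x ∈ 𝔰𝔬(W) : [h, x] = −2x}. -/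
/-!
For `v, w ∈ V` let `raise v` (`α ↦ v`, `u ↦ -b(v, u) β`) and `lower w` (`β ↦ w`, `u ↦ -b(w, u) α`)
be the elements of degree `2` and `-2`. Their bracket is `b(v, w) D + v ∧ w`, where `D = -h/2` and
`v ∧ w` is the skew map `u ↦ b(v, u) w - b(w, u) v` of `V`. Taking `v = w` anisotropic gives `D`.
For a skew `T` of `V`, a basis `eᵢ` and its `b`-dual basis `dᵢ`, `∑ dᵢ ∧ T eᵢ = 2T`, so `T` is
reached too. Finally every `x ∈ 𝔰𝔬(W)` is `raise v₁ + lower v₂ + a D + T` for suitable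
`v₁, v₂, a, T`.
-/

open LinearMap

/-- The symmetric bilinear form on `W = U ⊕ V`, where `U = Kα ⊕ Kβ` (modelled as `K × K`,
with `α = (1,0)`, `β = (0,1)`) is the hyperbolic plane (`B(α,α) = B(β,β) = 0`,
`B(α,β) = 1`) and the sum is orthogonal. -/
noncomputable def hypPlaneForm (K V : Type) [Field K] [AddCommGroup V] [Module K V]
    (b : LinearMap.BilinForm K V) : LinearMap.BilinForm K ((K × K) × V) :=
  LinearMap.mk₂ K
    (fun x y => x.1.1 * y.1.2 + x.1.2 * y.1.1 + b x.2 y.2)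
    (by
      intro m m' n
      simp only [Prod.fst_add, Prod.snd_add, map_add, LinearMap.add_apply]
      ring)
    (by
      intro c m n
      simp only [Prod.smul_fst, Prod.smul_snd, map_smul, LinearMap.smul_apply,
        smul_eq_mul]
      ring)
    (by
      intro m n n'
      simp only [Prod.fst_add, Prod.snd_add, map_add, LinearMap.add_apply]
      ring)
    (by
      intro c m n
      simp only [Prod.smul_fst, Prod.smul_snd, map_smul, LinearMap.smul_apply,
        smul_eq_mul]
      ring)

/-- The grading operator `h` on `W = U ⊕ V`: `h(α) = -2α`, `h(β) = 2β`, `h|_V = 0`. -/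
noncomputable def hOp (K V : Type) [Field K] [AddCommGroup V] [Module K V] :
    Module.End K ((K × K) × V) :=
  LinearMap.prod
    ((((-2 : K) • LinearMap.fst K K K).prod ((2 : K) • LinearMap.snd K K K)) ∘ₗ
      LinearMap.fst K (K × K) V)
    0

attribute [local instance 100] LieRing.ofAssociativeRing

section HyperbolicExtension

variable {K V : Type} [Field K] [AddCommGroup V] [Module K V] (b : LinearMap.BilinForm K V)

@[simp] lemma hypPlaneForm_apply (x y : (K × K) × V) :
    hypPlaneForm K V b x y = x.1.1 * y.1.2 + x.1.2 * y.1.1 + b x.2 y.2 := rfl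

@[simp] lemma hOp_apply (x : (K × K) × V) :
    hOp K V x = ((-2 * x.1.1, 2 * x.1.2), 0) := by
  simp [hOp]

noncomputable def raise (v : V) : Module.End K ((K × K) × V) :=
  LinearMap.prod
    (LinearMap.prod 0 (-(b v ∘ₗ LinearMap.snd K (K × K) V)))
    ((LinearMap.fst K K K ∘ₗ LinearMap.fst K (K × K) V).smulRight v)

noncomputable def lower (w : V) : Module.End K ((K × K) × V) :=
  LinearMap.prod
    (LinearMap.prod (-(b w ∘ₗ LinearMap.snd K (K × K) V)) 0)
    ((LinearMap.snd K K K ∘ₗ LinearMap.fst K (K × K) V).smulRight w)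

variable (K V) in
/-- Equal to `-h/2`; together with `extendByZero` it spans the degree-`0` part of `𝔰𝔬(W)`. -/
noncomputable def planeScaling : Module.End K ((K × K) × V) :=
  LinearMap.prod
    (LinearMap.prod (LinearMap.fst K K K ∘ₗ LinearMap.fst K (K × K) V)
      (-(LinearMap.snd K K K ∘ₗ LinearMap.fst K (K × K) V)))
    0

variable (K) in
noncomputable def extendByZero : Module.End K V →ₗ[K] Module.End K ((K × K) × V) where
  toFun T := LinearMap.inr K (K × K) V ∘ₗ T ∘ₗ LinearMap.snd K (K × K) V
  map_add' _ _ := by ext <;> simp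
  map_smul' _ _ := by ext <;> simp

noncomputable def wedge (v w : V) : Module.End K V :=
  (b v).smulRight w - (b w).smulRight v

@[simp] lemma raise_apply (v : V) (x : (K × K) × V) :
    raise b v x = ((0, -b v x.2), x.1.1 • v) := rfl

@[simp] lemma lower_apply (w : V) (x : (K × K) × V) :
    lower b w x = ((-b w x.2, 0), x.1.2 • w) := rfl

@[simp] lemma planeScaling_apply (x : (K × K) × V) :
    planeScaling K V x = ((x.1.1, -x.1.2), 0) := rfl

@[simp] lemma extendByZero_apply (T : Module.End K V) (x : (K × K) × V) :
    extendByZero K T x = ((0, 0), T x.2) := rfl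

@[simp] lemma wedge_apply (v w u : V) : wedge b v w u = b v u • w - b w u • v := rfl

lemma raise_skew (hb : b.IsSymm) (v : V) (x y : (K × K) × V) :
    hypPlaneForm K V b (raise b v x) y + hypPlaneForm K V b x (raise b v y) = 0 := by
  simp only [raise_apply, hypPlaneForm_apply, map_smul, LinearMap.smul_apply, smul_eq_mul,
    hb.eq x.2 v]
  ring

lemma lower_skew (hb : b.IsSymm) (w : V) (x y : (K × K) × V) :
    hypPlaneForm K V b (lower b w x) y + hypPlaneForm K V b x (lower b w y) = 0 := by
  simp only [lower_apply, hypPlaneForm_apply, map_smul, LinearMap.smul_apply, smul_eq_mul,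
    hb.eq x.2 w]
  ring

lemma lie_hOp_raise (v : V) : ⁅hOp K V, raise b v⁆ = (2 : K) • raise b v := by
  ext x <;> simp [Ring.lie_def]

lemma lie_hOp_lower (w : V) : ⁅hOp K V, lower b w⁆ = (-2 : K) • lower b w := by
  ext x <;> simp [Ring.lie_def]

lemma lie_raise_lower (hb : b.IsSymm) (v w : V) :
    ⁅raise b v, lower b w⁆ = b v w • planeScaling K V + extendByZero K (wedge b v w) := by
  ext x <;> simp [Ring.lie_def, hb.eq w v, sub_eq_add_neg, add_comm]

lemma eq_raise_add_lower_add_smul_add_extendByZero [CharZero K]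
    (x : Module.End K ((K × K) × V))
    (hx : ∀ p q, hypPlaneForm K V b (x p) q + hypPlaneForm K V b p (x q) = 0) :
    x = raise b (x ((1, 0), 0)).2 + lower b (x ((0, 1), 0)).2
      + (x ((1, 0), 0)).1.1 • planeScaling K V
      + extendByZero K (LinearMap.snd K (K × K) V ∘ₗ x ∘ₗ LinearMap.inr K (K × K) V) := by
  have hαα : (x ((1, 0), 0)).1.2 = 0 := by simpa using hx ((1, 0), 0) ((1, 0), 0)
  have hββ : (x ((0, 1), 0)).1.1 = 0 := by simpa using hx ((0, 1), 0) ((0, 1), 0)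
  have hαβ : (x ((0, 1), 0)).1.2 = -(x ((1, 0), 0)).1.1 :=
    eq_neg_of_add_eq_zero_right (by simpa using hx ((1, 0), 0) ((0, 1), 0))
  have hαV (u : V) : (x (0, u)).1.2 = -b (x ((1, 0), 0)).2 u :=
    eq_neg_of_add_eq_zero_right (by simpa using hx ((1, 0), 0) (0, u))
  have hβV (u : V) : (x (0, u)).1.1 = -b (x ((0, 1), 0)).2 u :=
    eq_neg_of_add_eq_zero_right (by simpa using hx ((0, 1), 0) (0, u))
  ext <;> simp [Prod.mk_zero_zero, hαα, hββ, hαβ, hαV, hβV]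

lemma sum_wedge_dualBasis_eq_two_smul (hb : b.IsSymm) (hB : b.Nondegenerate) {ι : Type*}
    [Fintype ι] [DecidableEq ι] (e : Module.Basis ι K V) (T : Module.End K V)
    (hT : ∀ u u', b (T u) u' + b u (T u') = 0) :
    ∑ i, wedge b (b.dualBasis hB e i) (T (e i)) = (2 : K) • T := by
  have sum_e (u : V) : ∑ i, b (b.dualBasis hB e i) u • e i = u := by
    conv_rhs => rw [← (b.dualBasis hB (b.dualBasis hB e)).sum_repr u]
    simp_rw [LinearMap.BilinForm.dualBasis_repr_apply,
      LinearMap.BilinForm.dualBasis_dualBasis hB hb, hb.eq u]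
  have sum_d (u : V) : ∑ i, b (e i) u • b.dualBasis hB e i = u := by
    conv_rhs => rw [← (b.dualBasis hB e).sum_repr u]
    simp_rw [LinearMap.BilinForm.dualBasis_repr_apply, hb.eq u]
  ext u
  have sum_T : ∑ i, b (b.dualBasis hB e i) u • T (e i) = T u := by
    conv_rhs => rw [← sum_e u]
    simp only [map_sum, map_smul]
  have hTe (i) : b (T (e i)) u = -b (e i) (T u) := eq_neg_of_add_eq_zero_left (hT _ _)
  simp only [LinearMap.sum_apply, wedge_apply, Finset.sum_sub_distrib, hTe, neg_smul,
    Finset.sum_neg_distrib, sum_d, sum_T, LinearMap.smul_apply]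
  module

variable (S : LieSubalgebra K (Module.End K ((K × K) × V)))

lemma planeScaling_mem (hraise : ∀ v, raise b v ∈ S) (hlower : ∀ w, lower b w ∈ S)
    (hb : b.IsSymm) {v : V} (hv : b v v ≠ 0) : planeScaling K V ∈ S := by
  have h := S.lie_mem (hraise v) (hlower v)
  rw [lie_raise_lower b hb, wedge, sub_self, map_zero, add_zero] at h
  exact (S.toSubmodule.smul_mem_iff hv).mp h

lemma extendByZero_mem [CharZero K] [FiniteDimensional K V] (hraise : ∀ v, raise b v ∈ S)
    (hlower : ∀ w, lower b w ∈ S) (hb : b.IsSymm) (hB : b.Nondegenerate)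
    (hD : planeScaling K V ∈ S) (T : Module.End K V)
    (hT : ∀ u u', b (T u) u' + b u (T u') = 0) : extendByZero K T ∈ S := by
  set e := Module.finBasis K V
  set d := b.dualBasis hB e
  have hsum : ∑ i, ⁅raise b (d i), lower b (T (e i))⁆
      = (∑ i, b (d i) (T (e i))) • planeScaling K V + (2 : K) • extendByZero K T := by
    simp_rw [lie_raise_lower b hb, Finset.sum_add_distrib, ← Finset.sum_smul, ← map_sum,
      d, sum_wedge_dualBasis_eq_two_smul b hb hB e T hT, map_smul]
  have h2T : (2 : K) • extendByZero K T ∈ S := by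
    rw [eq_sub_of_add_eq' hsum.symm]
    exact sub_mem (sum_mem fun i _ => S.lie_mem (hraise _) (hlower _)) (S.smul_mem _ hD)
  exact (S.toSubmodule.smul_mem_iff two_ne_zero).mp h2T

end HyperbolicExtension

/-- `so(U ⊕ V)` (for `dim V ≥ 2`, `V` nondegenerate, `U` the hyperbolic plane) is
generated as a Lie algebra by its parts of degree `2` and `-2` (the eigenspaces of
`ad h` with eigenvalues `±2`). -/
theorem stmt_19 {K : Type} [Field K] [CharZero K]
    {V : Type} [AddCommGroup V] [Module K V] [FiniteDimensional K V]
    (b : LinearMap.BilinForm K V)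
    (hsymm : ∀ v w, b v w = b w v)
    (hnd : ∀ v, (∀ w, b v w = 0) → v = 0)
    (hdim : 2 ≤ Module.finrank K V) :
    ∀ x : Module.End K ((K × K) × V),
      (∀ v w, hypPlaneForm K V b (x v) w + hypPlaneForm K V b v (x w) = 0) →
      x ∈ LieSubalgebra.lieSpan K (Module.End K ((K × K) × V))
        {y | (∀ v w, hypPlaneForm K V b (y v) w + hypPlaneForm K V b v (y w) = 0) ∧
          (⁅hOp K V, y⁆ = (2 : K) • y ∨ ⁅hOp K V, y⁆ = (-2 : K) • y)} := by
  intro x hx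
  set S := LieSubalgebra.lieSpan K (Module.End K ((K × K) × V))
    {y | (∀ v w, hypPlaneForm K V b (y v) w + hypPlaneForm K V b v (y w) = 0) ∧
      (⁅hOp K V, y⁆ = (2 : K) • y ∨ ⁅hOp K V, y⁆ = (-2 : K) • y)}
  have hb : b.IsSymm := ⟨hsymm⟩
  have hB : b.Nondegenerate := hb.isRefl.nondegenerate_iff_separatingLeft.mpr hnd
  have hraise (v : V) : raise b v ∈ S :=
    LieSubalgebra.subset_lieSpan ⟨raise_skew b hb v, Or.inl (lie_hOp_raise b v)⟩
  have hlower (w : V) : lower b w ∈ S :=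
    LieSubalgebra.subset_lieSpan ⟨lower_skew b hb w, Or.inr (lie_hOp_lower b w)⟩
  obtain ⟨v₀, hv₀⟩ : ∃ v, b v v ≠ 0 := by
    have : Nontrivial V := Module.nontrivial_of_finrank_pos (R := K) (by omega)
    have : Invertible (2 : K) := invertibleOfNonzero two_ne_zero
    obtain ⟨v, hv⟩ := exists_ne (0 : V)
    exact LinearMap.BilinForm.exists_bilinForm_self_ne_zero
      (fun hb0 => hv (hnd v fun w => by rw [hb0]; rfl))
      (LinearMap.BilinForm.isSymm_iff.mp hb)
  have hD := planeScaling_mem b S hraise hlower hb hv₀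
  rw [eq_raise_add_lower_add_smul_add_extendByZero b x hx]
  exact add_mem (add_mem (add_mem (hraise _) (hlower _)) (S.smul_mem _ hD))
    (extendByZero_mem b S hraise hlower hb hB hD _ fun u u' => by simpa using hx (0, u) (0, u'))
end
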